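/- For all odd integers t ≥ 3 and all positive integers k such that gcd(t, k) ≠ 1 or k ≡ 2 (mod 4): 1 + gcd(4,k)²/4 − gcd(t,k)²/t − gcd(4t,k)²/(4t) − gcd(2,k)² − gcd(2t,k)²·(t−5)/(4t) < −1. Moreover, if gcd(t,k) = 1 and k ≢ 2 (mod 4), the left-hand side equals 0. -/

import Mathlib

/-!
For odd `t`, `gcd(2t, k) = gcd(2, k) g` and `gcd(4t, k) = gcd(4, k) g` with `g = gcd(t, k)`, an odd
divisor of `t`. Hence the expression is `(1 - g²)/4` for odd `k`, `1 - g²` for `4 ∣ k`, and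
`-2 - g²(t - 3)/t` for `k ≡ 2 (mod 4)`: it vanishes when `g = 1` and `k ≢ 2 (mod 4)`, and is at
most `-2` otherwise, because `g ≠ 1` forces `g ≥ 3`.
-/

theorem Int.gcd_mul_of_isCoprime {m n : ℤ} (h : IsCoprime m n) (k : ℤ) :
    Int.gcd (m * n) k = Int.gcd m k * Int.gcd n k := by
  rw [Int.gcd_comm, Int.gcd_comm m, Int.gcd_comm n]
  simp only [Int.gcd_eq_natAbs, Int.natAbs_mul]
  exact Nat.Coprime.gcd_mul _ (Int.isCoprime_iff_gcd_eq_one.mp h)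

theorem Int.isCoprime_four_left {m : ℤ} (hm : Odd m) : IsCoprime 4 m := by
  simpa using (Int.isCoprime_two_left.mpr hm).pow_left (m := 2)

theorem Int.odd_gcd_of_odd_left {t : ℤ} (ht : Odd t) (k : ℤ) : Odd (Int.gcd t k) :=
  (Int.natAbs_odd.mpr ht).of_dvd_nat (Nat.gcd_dvd_left _ _)

theorem Int.cast_ne_zero_of_odd {t : ℤ} (ht : Odd t) : (t : ℚ) ≠ 0 :=
  Int.cast_ne_zero.mpr (by rintro rfl; exact Int.not_odd_zero ht)

def selfConjugateDefect (t k : ℤ) : ℚ :=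
  1 + (Int.gcd 4 k : ℚ)^2 / 4 - (Int.gcd t k : ℚ)^2 / t
    - (Int.gcd (4*t) k : ℚ)^2 / (4*t) - (Int.gcd 2 k : ℚ)^2
    - (Int.gcd (2*t) k : ℚ)^2 * (t - 5) / (4*t)

namespace selfConjugateDefect

variable {t k : ℤ}

theorem eq_gcd_two_four (ht : Odd t) :
    selfConjugateDefect t k = 1 + (Int.gcd 4 k : ℚ)^2 / 4 - (Int.gcd 2 k : ℚ)^2
      - (Int.gcd t k : ℚ)^2 * (4 + (Int.gcd 4 k : ℚ)^2 + (Int.gcd 2 k : ℚ)^2 * (t - 5))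
        / (4 * t) := by
  have := Int.cast_ne_zero_of_odd ht
  rw [selfConjugateDefect, Int.gcd_mul_of_isCoprime (Int.isCoprime_two_left.mpr ht),
    Int.gcd_mul_of_isCoprime (Int.isCoprime_four_left ht)]
  push_cast
  field_simp
  ring

theorem of_odd (ht : Odd t) (hk : Odd k) :
    selfConjugateDefect t k = (1 - (Int.gcd t k : ℚ)^2) / 4 := by
  have := Int.cast_ne_zero_of_odd ht
  rw [eq_gcd_two_four ht, Int.isCoprime_iff_gcd_eq_one.mp (Int.isCoprime_two_left.mpr hk),
    Int.isCoprime_iff_gcd_eq_one.mp (Int.isCoprime_four_left hk)]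
  field_simp
  ring

theorem of_emod_four_eq_two (ht : Odd t) (hk : k % 4 = 2) :
    selfConjugateDefect t k = -2 - (Int.gcd t k : ℚ)^2 * (t - 3) / t := by
  have := Int.cast_ne_zero_of_odd ht
  have h4 : Int.gcd 4 k = 2 := by rw [Int.gcd_comm, ← Int.gcd_emod, hk]; rfl
  rw [eq_gcd_two_four ht, h4, Int.gcd_eq_natAbs_left (by omega : (2 : ℤ) ∣ k)]
  field_simp
  ring

theorem of_four_dvd (ht : Odd t) (hk : 4 ∣ k) :
    selfConjugateDefect t k = 1 - (Int.gcd t k : ℚ)^2 := by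
  have := Int.cast_ne_zero_of_odd ht
  rw [eq_gcd_two_four ht, Int.gcd_eq_natAbs_left hk,
    Int.gcd_eq_natAbs_left ((by norm_num : (2 : ℤ) ∣ 4).trans hk)]
  field_simp
  ring

end selfConjugateDefect

theorem stmt_11_general (t k : ℤ) (ht : 3 ≤ t) (hto : Odd t) :
    ((Int.gcd t k ≠ 1 ∨ k % 4 = 2) →
      (1 + (Int.gcd 4 k : ℚ)^2 / 4 - (Int.gcd t k : ℚ)^2 / t
        - (Int.gcd (4*t) k : ℚ)^2 / (4*t) - (Int.gcd 2 k : ℚ)^2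
        - (Int.gcd (2*t) k : ℚ)^2 * (t - 5) / (4*t)) < -1) ∧
    ((Int.gcd t k = 1 ∧ k % 4 ≠ 2) →
      (1 + (Int.gcd 4 k : ℚ)^2 / 4 - (Int.gcd t k : ℚ)^2 / t
        - (Int.gcd (4*t) k : ℚ)^2 / (4*t) - (Int.gcd 2 k : ℚ)^2
        - (Int.gcd (2*t) k : ℚ)^2 * (t - 5) / (4*t)) = 0) := by
  change (_ → selfConjugateDefect t k < -1) ∧ (_ → selfConjugateDefect t k = 0)
  have hg : Int.gcd t k ≠ 1 → (3 : ℚ) ≤ Int.gcd t k := fun hne => by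
    have := Nat.odd_iff.mp (Int.odd_gcd_of_odd_left hto k)
    exact_mod_cast (by omega : 3 ≤ Int.gcd t k)
  rcases (by rw [Int.odd_iff]; omega : Odd k ∨ k % 4 = 2 ∨ 4 ∣ k) with hk | hk | hk
  · rw [selfConjugateDefect.of_odd hto hk]
    refine ⟨fun h => ?_, fun h => by rw [h.1]; norm_num⟩
    nlinarith [hg (h.resolve_right (by rw [Int.odd_iff] at hk; omega))]
  · rw [selfConjugateDefect.of_emod_four_eq_two hto hk]
    refine ⟨fun _ => ?_, fun h => absurd hk h.2⟩
    have ht3 : (3 : ℚ) ≤ t := by exact_mod_cast ht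
    have : 0 ≤ (Int.gcd t k : ℚ)^2 * (t - 3) / t := by positivity
    linarith
  · rw [selfConjugateDefect.of_four_dvd hto hk]
    refine ⟨fun h => ?_, fun h => by rw [h.1]; norm_num⟩
    nlinarith [hg (h.resolve_right (by omega))]

theorem stmt_11 (t k : ℤ) (ht : 3 ≤ t) (hto : Odd t) (hk : 0 < k) :
    ((Int.gcd t k ≠ 1 ∨ k % 4 = 2) →
      (1 + (Int.gcd 4 k : ℚ)^2 / 4 - (Int.gcd t k : ℚ)^2 / t
        - (Int.gcd (4*t) k : ℚ)^2 / (4*t) - (Int.gcd 2 k : ℚ)^2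
        - (Int.gcd (2*t) k : ℚ)^2 * (t - 5) / (4*t)) < -1) ∧
    ((Int.gcd t k = 1 ∧ k % 4 ≠ 2) →
      (1 + (Int.gcd 4 k : ℚ)^2 / 4 - (Int.gcd t k : ℚ)^2 / t
        - (Int.gcd (4*t) k : ℚ)^2 / (4*t) - (Int.gcd 2 k : ℚ)^2
        - (Int.gcd (2*t) k : ℚ)^2 * (t - 5) / (4*t)) = 0) :=
  stmt_11_general t k ht hto
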